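/- Let f be a Hénon-type polynomial automorphism of ℂ² of degree d > 1 satisfying the normalization and standard facts in the context, with f^n = (P_n, Q_n) and constant nonzero Jacobian J_f := det Df (so det D(f^n) = J_f^n). Let A = (a₁, a₂; a₃, a₄) ∈ M₂(ℂ) with a₄ ≠ 0, set Y := {(z,w) ∈ B : a₄ ∂_z g⁺(z,w) − a₃ ∂_w g⁺(z,w) = 0} where B := {g⁺ > 0}, and for n with d^n ≥ 2 set φ_n := (d^n − 1)^{-1} log|det(D(f^n) − A)|. Then φ_n = g⁺ + O(n d^{-n}) locally uniformly on B ∖ Y: for every compact set K ⊂ B ∖ Y there exist C > 0 and N ∈ ℕ such that for all n ≥ N, sup_K |φ_n − g⁺| ≤ C n d^{-n}. -/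

import Mathlib

open Filter Topology

noncomputable section

/-- Evaluation of a polynomial in two variables at a point of `ℂ²`. -/
def ev (p : MvPolynomial (Fin 2) ℂ) (v : ℂ × ℂ) : ℂ :=
  MvPolynomial.eval ![v.1, v.2] p

/-- The Wirtinger partial derivative `∂_z` of a real function on `ℂ²`
(first coordinate): `∂_z g = (∂_x g − i ∂_y g)/2`. -/
def wirtZ (g : ℂ × ℂ → ℝ) (v : ℂ × ℂ) : ℂ :=
  (↑(fderiv ℝ g v ((1 : ℂ), (0 : ℂ))) - Complex.I * ↑(fderiv ℝ g v (Complex.I, (0 : ℂ)))) / 2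

/-- The Wirtinger partial derivative `∂_w` of a real function on `ℂ²`
(second coordinate). -/
def wirtW (g : ℂ × ℂ → ℝ) (v : ℂ × ℂ) : ℂ :=
  (↑(fderiv ℝ g v ((0 : ℂ), (1 : ℂ))) - Complex.I * ↑(fderiv ℝ g v ((0 : ℂ), Complex.I))) / 2

/-- `g` is pluriharmonic on the open set `B ⊆ ℂ²`: locally the real part of a
holomorphic function. -/
def Pluriharmonic (g : ℂ × ℂ → ℝ) (B : Set (ℂ × ℂ)) : Prop :=
  ∀ v ∈ B, ∃ U : Set (ℂ × ℂ), IsOpen U ∧ v ∈ U ∧ U ⊆ B ∧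
    ∃ h : ℂ × ℂ → ℂ, DifferentiableOn ℂ h U ∧ ∀ w ∈ U, g w = (h w).re


open Filter Topology Metric

notation "Complex.abs" => (norm : ℂ → ℝ)


lemma hasDerivAt_ev_fst (p : MvPolynomial (Fin 2) ℂ) (w z : ℂ) :
    HasDerivAt (fun z => ev p (z, w)) (ev (MvPolynomial.pderiv 0 p) (z, w)) z := by
  induction p using MvPolynomial.induction_on with
  | C a => simpa [ev] using hasDerivAt_const z a
  | add p q hp hq => simpa [ev, map_add, Pi.add_def] using hp.add hq
  | mul_X p i hp =>
      have hX : HasDerivAt (fun z => ev (MvPolynomial.X i) (z, w))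
          (ev (MvPolynomial.pderiv 0 (MvPolynomial.X i)) (z, w)) z := by
        fin_cases i
        · simpa [ev, MvPolynomial.pderiv_X] using hasDerivAt_id' z
        · simpa [ev, MvPolynomial.pderiv_X] using hasDerivAt_const z w
      have := hp.mul hX
      simpa [ev, MvPolynomial.pderiv_mul, map_mul, map_add, mul_comm, add_comm, Pi.mul_def] using this

lemma hasDerivAt_ev_snd (p : MvPolynomial (Fin 2) ℂ) (z w : ℂ) :
    HasDerivAt (fun w => ev p (z, w)) (ev (MvPolynomial.pderiv 1 p) (z, w)) w := by
  induction p using MvPolynomial.induction_on with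
  | C a => simpa [ev] using hasDerivAt_const w a
  | add p q hp hq => simpa [ev, map_add, Pi.add_def] using hp.add hq
  | mul_X p i hp =>
      have hX : HasDerivAt (fun w => ev (MvPolynomial.X i) (z, w))
          (ev (MvPolynomial.pderiv 1 (MvPolynomial.X i)) (z, w)) w := by
        fin_cases i
        · simpa [ev, MvPolynomial.pderiv_X] using hasDerivAt_const w z
        · simpa [ev, MvPolynomial.pderiv_X] using hasDerivAt_id' w
      have := hp.mul hX
      simpa [ev, MvPolynomial.pderiv_mul, map_mul, map_add, mul_comm, add_comm, Pi.mul_def] using this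

lemma cauchy_est {f : ℂ → ℂ} {f' : ℂ} {c : ℂ} {r M : ℝ} (hr : 0 < r)
    (hf : ∀ z ∈ closedBall c r, DifferentiableAt ℂ f z)
    (hd : HasDerivAt f f' c)
    (hM : ∀ z ∈ closedBall c r, ‖f z‖ ≤ M) : ‖f'‖ ≤ M / r := by
  have hdc : DiffContOnCl ℂ f (ball c r) :=
    ⟨fun z hz => (hf z (ball_subset_closedBall hz)).differentiableWithinAt,
     by
      rw [closure_ball c hr.ne']
      exact fun z hz => (hf z hz).continuousAt.continuousWithinAt⟩
  have := Complex.norm_deriv_le_of_forall_mem_sphere_norm_le hr hdc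
    (fun z hz => hM z (sphere_subset_closedBall hz))
  rwa [hd.deriv] at this

lemma slice_bound {φ ψ : ℂ → ℂ} {z₀ : ℂ} {r C : ℝ} {φ' ψ' : ℂ} (hr : 0 < r)
    (hφ : HasDerivAt φ φ' z₀)
    (hφd : ∀ z ∈ closedBall z₀ r, DifferentiableAt ℂ φ z)
    (hψ : HasDerivAt ψ ψ' z₀)
    (hψd : ∀ z ∈ closedBall z₀ r, DifferentiableAt ℂ ψ z)
    (hb : ∀ z ∈ closedBall z₀ r, Complex.abs (φ z) * Real.exp (-(ψ z).re) ≤ C) :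
    Complex.abs (φ' - ψ' * φ z₀) ≤ C / r * Real.exp ((ψ z₀).re) := by
  set u : ℂ → ℂ := fun z => φ z * Complex.exp (-ψ z) with hu_def
  have hu : ∀ z ∈ closedBall z₀ r, DifferentiableAt ℂ u z := fun z hz =>
    (hφd z hz).mul ((hψd z hz).neg.cexp)
  have hud : HasDerivAt u ((φ' - ψ' * φ z₀) * Complex.exp (-ψ z₀)) z₀ := by
    have h1 : HasDerivAt (fun z => Complex.exp (-ψ z))
        (Complex.exp (-ψ z₀) * -ψ') z₀ := hψ.neg.cexp
    have := (hφ.mul h1 : HasDerivAt (fun z => φ z * Complex.exp (-ψ z)) _ z₀)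
    rw [show (φ' - ψ' * φ z₀) * Complex.exp (-ψ z₀)
        = φ' * Complex.exp (-ψ z₀) + φ z₀ * (Complex.exp (-ψ z₀) * -ψ') by ring]
    exact this
  have hub : ∀ z ∈ closedBall z₀ r, ‖u z‖ ≤ C := by
    intro z hz
    have : ‖u z‖ = Complex.abs (φ z) * Real.exp (-(ψ z).re) := by
      simp [hu_def, Complex.norm_exp]
    rw [this]; exact hb z hz
  have hest := cauchy_est hr hu hud hub
  have h2 : ‖(φ' - ψ' * φ z₀) * Complex.exp (-ψ z₀)‖
      = Complex.abs (φ' - ψ' * φ z₀) * Real.exp (-(ψ z₀).re) := by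
    simp [Complex.norm_exp]
  rw [h2] at hest
  have h3 : (0:ℝ) < Real.exp (-(ψ z₀).re) := Real.exp_pos _
  calc Complex.abs (φ' - ψ' * φ z₀)
      = Complex.abs (φ' - ψ' * φ z₀) * Real.exp (-(ψ z₀).re) * Real.exp ((ψ z₀).re) := by
        rw [mul_assoc, ← Real.exp_add]; simp
    _ ≤ C / r * Real.exp ((ψ z₀).re) := by
        apply mul_le_mul_of_nonneg_right hest (Real.exp_pos _).le

lemma hasDerivAt_slice_fst {h : ℂ × ℂ → ℂ} {x : ℂ × ℂ} (hh : DifferentiableAt ℂ h x) :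
    HasDerivAt (fun z => h (z, x.2)) (fderiv ℂ h x ((1:ℂ), (0:ℂ))) x.1 := by
  have h1 : HasDerivAt (fun z : ℂ => ((z, x.2) : ℂ × ℂ)) ((1:ℂ), (0:ℂ)) x.1 :=
    (hasDerivAt_id x.1).prodMk (hasDerivAt_const x.1 x.2)
  exact hh.hasFDerivAt.comp_hasDerivAt x.1 h1

lemma hasDerivAt_slice_snd {h : ℂ × ℂ → ℂ} {x : ℂ × ℂ} (hh : DifferentiableAt ℂ h x) :
    HasDerivAt (fun w => h (x.1, w)) (fderiv ℂ h x ((0:ℂ), (1:ℂ))) x.2 := by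
  have h1 : HasDerivAt (fun w : ℂ => ((x.1, w) : ℂ × ℂ)) ((0:ℂ), (1:ℂ)) x.2 :=
    (hasDerivAt_const x.2 x.1).prodMk (hasDerivAt_id x.2)
  exact hh.hasFDerivAt.comp_hasDerivAt x.2 h1

lemma wirt_eq {g : ℂ × ℂ → ℝ} {h : ℂ × ℂ → ℂ} {U : Set (ℂ × ℂ)} (hU : IsOpen U) {v : ℂ × ℂ}
    (hv : v ∈ U) (hh : DifferentiableAt ℂ h v) (hgh : ∀ x ∈ U, g x = (h x).re) :
    ((↑(fderiv ℝ g v ((1 : ℂ), (0 : ℂ))) - Complex.I * ↑(fderiv ℝ g v (Complex.I, (0 : ℂ)))) / 2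
      = fderiv ℂ h v ((1:ℂ), (0:ℂ)) / 2) ∧
    ((↑(fderiv ℝ g v ((0 : ℂ), (1 : ℂ))) - Complex.I * ↑(fderiv ℝ g v ((0 : ℂ), Complex.I))) / 2
      = fderiv ℂ h v ((0:ℂ), (1:ℂ)) / 2) := by
  set L := fderiv ℂ h v with hL_def
  have hfd : HasFDerivAt h L v := hh.hasFDerivAt
  have hgd : HasFDerivAt g (Complex.reCLM.comp (L.restrictScalars ℝ)) v := by
    have h2 : HasFDerivAt (fun x => (h x).re) (Complex.reCLM.comp (L.restrictScalars ℝ)) v :=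
      Complex.reCLM.hasFDerivAt.comp v (hfd.restrictScalars ℝ)
    apply h2.congr_of_eventuallyEq
    filter_upwards [hU.mem_nhds hv] with x hx using hgh x hx
  have hLg : fderiv ℝ g v = Complex.reCLM.comp (L.restrictScalars ℝ) := hgd.fderiv
  have key : ∀ e : ℂ × ℂ, ((↑(fderiv ℝ g v e) : ℂ) = ↑((L e).re)) := by
    intro e; rw [hLg]; simp
  have hsm : ∀ e : ℂ × ℂ, L (Complex.I • e) = Complex.I * L e := by
    intro e; rw [map_smul]; simp [smul_eq_mul]
  constructor
  · have h10 : ((Complex.I, (0:ℂ)) : ℂ × ℂ) = Complex.I • ((1:ℂ), (0:ℂ)) := by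
      simp [Prod.smul_mk]
    rw [key, h10, key, hsm]
    set a := L ((1:ℂ), (0:ℂ))
    have : ((a.re : ℂ) - Complex.I * ((Complex.I * a).re : ℝ)) = a := by
      rw [Complex.mul_re]
      simp
      rw [mul_comm]
      exact Complex.re_add_im a
    rw [this]
  · have h01 : ((0:ℂ), Complex.I) = Complex.I • (((0:ℂ), (1:ℂ)) : ℂ × ℂ) := by
      simp [Prod.smul_mk]
    rw [key, h01, key, hsm]
    set a := L ((0:ℂ), (1:ℂ))
    have : ((a.re : ℂ) - Complex.I * ((Complex.I * a).re : ℝ)) = a := by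
      rw [Complex.mul_re]
      simp
      rw [mul_comm]
      exact Complex.re_add_im a
    rw [this]

lemma fderiv_close {h : ℂ × ℂ → ℂ} {U : Set (ℂ × ℂ)} (hU : IsOpen U)
    (hh : DifferentiableOn ℂ h U) {v₀ : ℂ × ℂ} {r : ℝ} (hr : 0 < r)
    (hD : closedBall v₀ (3 * r) ⊆ U) {ε : ℝ} (hε : 0 < ε) {e : ℂ × ℂ} (he : ‖e‖ ≤ 1) :
    ∃ ρ, 0 < ρ ∧ ρ ≤ r ∧ ∀ v ∈ closedBall v₀ ρ,
      Complex.abs (fderiv ℂ h v e - fderiv ℂ h v₀ e) ≤ ε := by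
  have hdiffAt : ∀ x ∈ U, DifferentiableAt ℂ h x := fun x hx =>
    hh.differentiableAt (hU.mem_nhds hx)
  have hcomp : IsCompact (closedBall v₀ (3 * r)) := isCompact_closedBall _ _
  have huc : UniformContinuousOn h (closedBall v₀ (3 * r)) :=
    hcomp.uniformContinuousOn_of_continuous (hh.continuousOn.mono hD)
  obtain ⟨δ, hδ, hδ'⟩ := Metric.uniformContinuousOn_iff.1 huc (ε * r) (by positivity)
  refine ⟨min r (δ / 2), by positivity, min_le_left _ _, ?_⟩
  intro v hv
  have hvr : dist v v₀ ≤ r := le_trans (mem_closedBall.1 hv) (min_le_left _ _)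
  have hvδ : dist v v₀ < δ := lt_of_le_of_lt (le_trans (mem_closedBall.1 hv) (min_le_right _ _))
    (by linarith)
  -- membership of line points
  have hmem : ∀ x : ℂ × ℂ, dist x v₀ ≤ r → ∀ z ∈ closedBall (0:ℂ) r,
      x + z • e ∈ closedBall v₀ (3 * r) := by
    intro x hx z hz
    have htri : dist (x + z • e) v₀ ≤ dist (x + z • e) x + dist x v₀ := dist_triangle _ _ _
    have h1 : dist (x + z • e) x = ‖z • e‖ := by
      rw [dist_eq_norm, add_sub_cancel_left]
    have h2 : ‖z • e‖ ≤ r := by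
      rw [norm_smul]
      calc ‖z‖ * ‖e‖ ≤ r * 1 :=
        mul_le_mul (mem_closedBall_zero_iff.1 hz) he (norm_nonneg _) hr.le
      _ = r := mul_one r
    refine mem_closedBall.2 ?_
    rw [h1] at htri
    linarith
  -- the auxiliary one-variable function
  set G : ℂ → ℂ := fun z => h (v + z • e) - h (v₀ + z • e) with hG_def
  have hline : ∀ (b : ℂ × ℂ) (z : ℂ), b + z • e ∈ U →
      HasDerivAt (fun y : ℂ => h (b + y • e)) (fderiv ℂ h (b + z • e) e) z := by
    intro b z hb
    have hinner : HasDerivAt (fun y : ℂ => b + y • e) e z := by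
      simpa using ((hasDerivAt_id z).smul_const e).const_add b
    exact (hdiffAt _ hb).hasFDerivAt.comp_hasDerivAt z hinner
  have hGd : ∀ z ∈ closedBall (0:ℂ) r, HasDerivAt G
      (fderiv ℂ h (v + z • e) e - fderiv ℂ h (v₀ + z • e) e) z := by
    intro z hz
    have hm1 : v + z • e ∈ U := hD (hmem v hvr z hz)
    have hm2 : v₀ + z • e ∈ U := hD (hmem v₀ (by simp [hr.le]) z hz)
    exact (hline v z hm1).sub (hline v₀ z hm2)
  have hGb : ∀ z ∈ closedBall (0:ℂ) r, ‖G z‖ ≤ ε * r := by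
    intro z hz
    have hm1 := hmem v hvr z hz
    have hm2 := hmem v₀ (by simp [hr.le]) z hz
    have hd : dist (v + z • e) (v₀ + z • e) < δ := by
      rwa [dist_add_right]
    have := hδ' _ hm1 _ hm2 hd
    rw [hG_def]
    simpa [dist_eq_norm] using this.le
  have h0 : (0:ℂ) ∈ closedBall (0:ℂ) r := by simp [hr.le]
  have key := cauchy_est hr (fun z hz => (hGd z hz).differentiableAt)
    (by simpa using hGd 0 h0) hGb
  calc Complex.abs (fderiv ℂ h v e - fderiv ℂ h v₀ e) ≤ ε * r / r := key
    _ = ε := by field_simp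

lemma eventually_linear_le_pow {c : ℝ} (hc : 1 < c) {δ : ℝ} (hδ : 0 < δ) (A B : ℝ) :
    ∀ᶠ n : ℕ in atTop, A + B * n ≤ δ * c ^ n := by
  have h1 : Tendsto (fun n : ℕ => c ^ n) atTop atTop := tendsto_pow_atTop_atTop_of_one_lt hc
  have hA : ∀ᶠ n : ℕ in atTop, 2 * A / δ ≤ c ^ n := h1.eventually_ge_atTop _
  have hB : (fun n : ℕ => ((n : ℝ) ^ 1)) =o[atTop] fun n : ℕ => c ^ n :=
    isLittleO_pow_const_const_pow_of_one_lt 1 hc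
  have hB' := hB.def (show (0:ℝ) < δ / (2 * (|B| + 1)) by positivity)
  filter_upwards [hA, hB'] with n h2 h3
  have hcpos : (0:ℝ) < c ^ n := pow_pos (by linarith) n
  have h4 : ‖((n:ℝ) ^ 1)‖ = (n:ℝ) := by simp
  have h5 : ‖c ^ n‖ = c ^ n := by rw [Real.norm_eq_abs, abs_of_pos hcpos]
  rw [h4, h5] at h3
  have h6 : B * n ≤ |B| * n := by
    apply mul_le_mul_of_nonneg_right (le_abs_self B) (Nat.cast_nonneg n)
  have h7 : |B| * (n:ℝ) ≤ (|B| + 1) * (δ / (2 * (|B| + 1)) * c ^ n) := by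
    apply mul_le_mul (by linarith [abs_nonneg B]) h3 (Nat.cast_nonneg n) (by positivity)
  have h8 : (|B| + 1) * (δ / (2 * (|B| + 1)) * c ^ n) = δ / 2 * c ^ n := by
    field_simp
  have h9 : A ≤ δ / 2 * c ^ n := by
    have := (div_le_iff₀ hδ).mp h2
    linarith
  nlinarith

set_option maxHeartbeats 4000000 in
/-- With `f` a Hénon-type polynomial automorphism of `ℂ²` of degree
`d > 1`, `f^n = (P_n, Q_n)`, constant nonzero Jacobian `J` (`det D(f^n) = J^n`), and
`A = (a₁,a₂;a₃,a₄)` with `a₄ ≠ 0`, the potentials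
`φ_n = (d^n − 1)⁻¹ log|det(D(f^n) − A)|` satisfy `φ_n = g⁺ + O(n d^{-n})` locally uniformly
on `B ∖ Y`, where `B = {g⁺ > 0}` and `Y = {a₄ ∂_z g⁺ − a₃ ∂_w g⁺ = 0} ∩ B`.  The standard
facts listed in the context are taken as hypotheses. -/
theorem potential_convergence_det_derivative_henon
    (d : ℕ) (hd : 1 < d)
    (P Q : ℕ → MvPolynomial (Fin 2) ℂ)
    (F : ℂ × ℂ → ℂ × ℂ)
    (hF : ∀ v : ℂ × ℂ, F v = (ev (P 1) v, ev (Q 1) v))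
    (hauto : ∃ Pi Qi : MvPolynomial (Fin 2) ℂ, ∀ v : ℂ × ℂ,
      (ev Pi (F v), ev Qi (F v)) = v ∧ F (ev Pi v, ev Qi v) = v)
    (hiter : ∀ n : ℕ, 1 ≤ n → ∀ v : ℂ × ℂ, F^[n] v = (ev (P n) v, ev (Q n) v))
    (hdeg : ∀ n : ℕ, 1 ≤ n →
      (P n).totalDegree = d ^ n ∧ (P n).degreeOf 0 = d ^ n ∧ (Q n).totalDegree < d ^ n)
    (J : ℂ) (hJ : J ≠ 0)
    (hJac : ∀ n : ℕ, 1 ≤ n →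
      MvPolynomial.pderiv 0 (P n) * MvPolynomial.pderiv 1 (Q n)
        - MvPolynomial.pderiv 1 (P n) * MvPolynomial.pderiv 0 (Q n)
        = MvPolynomial.C (J ^ n))
    (g : ℂ × ℂ → ℝ)
    (hglim : TendstoLocallyUniformly
      (fun (n : ℕ) (v : ℂ × ℂ) => Real.log (max 1 ‖F^[n] v‖) / (d : ℝ) ^ n) g atTop)
    (hgcont : Continuous g)
    (B : Set (ℂ × ℂ)) (hB : B = {v : ℂ × ℂ | 0 < g v})
    (hph : Pluriharmonic g B)
    (hgP : ∀ K : Set (ℂ × ℂ), K ⊆ B → IsCompact K →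
      ∃ C > (0 : ℝ), ∃ N : ℕ, ∀ n : ℕ, N ≤ n → ∀ v ∈ K,
        ev (P n) v ≠ 0 ∧
        |g v - Real.log ‖ev (P n) v‖ / (d : ℝ) ^ n| ≤ C / (d : ℝ) ^ n)
    (hQP : ∀ K : Set (ℂ × ℂ), K ⊆ B → IsCompact K → ∀ ε > (0 : ℝ), ∃ N : ℕ,
      ∀ n : ℕ, N ≤ n → ∀ v ∈ K,
        ‖ev (Q n) v‖ ≤ ε * ‖ev (P n) v‖)
    (a₁ a₂ a₃ a₄ : ℂ) (ha₄ : a₄ ≠ 0)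
    (Y : Set (ℂ × ℂ))
    (hY : Y = {v ∈ B | a₄ * wirtZ g v - a₃ * wirtW g v = 0}) :
    ∀ K : Set (ℂ × ℂ), K ⊆ B \ Y → IsCompact K →
      ∃ C > (0 : ℝ), ∃ N : ℕ, ∀ n : ℕ, N ≤ n → ∀ v ∈ K,
        |((d : ℝ) ^ n - 1)⁻¹ *
            Real.log
              ‖(ev (MvPolynomial.pderiv 0 (P n)) v - a₁) *
                  (ev (MvPolynomial.pderiv 1 (Q n)) v - a₄)
                - (ev (MvPolynomial.pderiv 1 (P n)) v - a₂) *
                  (ev (MvPolynomial.pderiv 0 (Q n)) v - a₃)‖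
          - g v| ≤ C * n / (d : ℝ) ^ n := by
  intro K hK hKc
  have loc : ∀ x ∈ K, ∃ ρ > (0:ℝ), ∃ C > (0:ℝ), ∃ N : ℕ, ∀ n, N ≤ n →
      ∀ v ∈ closedBall x ρ,
      |((d : ℝ) ^ n - 1)⁻¹ *
            Real.log (Complex.abs
              ((ev (MvPolynomial.pderiv 0 (P n)) v - a₁) *
                  (ev (MvPolynomial.pderiv 1 (Q n)) v - a₄)
                - (ev (MvPolynomial.pderiv 1 (P n)) v - a₂) *
                  (ev (MvPolynomial.pderiv 0 (Q n)) v - a₃)))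
          - g v| ≤ C * n / (d : ℝ) ^ n := by
    intro x hxK
    have hxBY := hK hxK
    have hxB : x ∈ B := hxBY.1
    have hxY : x ∉ Y := hxBY.2
    have hdR : (1:ℝ) < (d:ℝ) := by exact_mod_cast hd
    obtain ⟨U, hUo, hxU, hUB, h, hhd, hgh⟩ := hph x hxB
    obtain ⟨s, hs0, hsU⟩ := Metric.isOpen_iff.1 hUo x hxU
    set r : ℝ := s / 4 with hr_def
    have hr : 0 < r := by positivity
    clear_value r
    have hD3U : closedBall x (3 * r) ⊆ U :=
      (closedBall_subset_ball (by rw [hr_def]; linarith)).trans hsU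
    set D3 := closedBall x (3 * r) with hD3_def
    have hD3B : D3 ⊆ B := hD3U.trans hUB
    have hD3c : IsCompact D3 := isCompact_closedBall _ _
    have hxD3 : x ∈ D3 := mem_closedBall_self (by positivity)
    have hdiffAt : ∀ y ∈ U, DifferentiableAt ℂ h y := fun y hy =>
      hhd.differentiableAt (hUo.mem_nhds hy)
    -- derivative at x and m
    have hwx := wirt_eq hUo hxU (hdiffAt x hxU) hgh
    set α₀ := fderiv ℂ h x ((1:ℂ), (0:ℂ)) with hα₀_def
    set β₀ := fderiv ℂ h x ((0:ℂ), (1:ℂ)) with hβ₀_def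
    have hm0 : a₄ * α₀ - a₃ * β₀ ≠ 0 := by
      intro hcontra
      apply hxY
      rw [hY]
      refine ⟨hxB, ?_⟩
      have h1 : wirtZ g x = α₀ / 2 := hwx.1
      have h2 : wirtW g x = β₀ / 2 := hwx.2
      rw [h1, h2,
        show a₄ * (α₀ / 2) - a₃ * (β₀ / 2) = (a₄ * α₀ - a₃ * β₀) / 2 by ring,
        hcontra, zero_div]
    set m := Complex.abs (a₄ * α₀ - a₃ * β₀) with hm_def
    have hm : 0 < m := norm_pos_iff.mpr hm0
    clear_value m
    -- bound on h
    obtain ⟨M₀, hM₀⟩ := hD3c.exists_bound_of_continuousOn (hhd.continuousOn.mono hD3U)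
    have hM₀0 : 0 ≤ M₀ := le_trans (norm_nonneg _) (hM₀ x hxD3)
    -- membership helpers
    have hfst : ∀ p q : ℂ × ℂ, dist p.1 q.1 ≤ dist p q := fun p q => by
      rw [Prod.dist_eq]; exact le_max_left _ _
    have hsnd : ∀ p q : ℂ × ℂ, dist p.2 q.2 ≤ dist p q := fun p q => by
      rw [Prod.dist_eq]; exact le_max_right _ _
    have hmem1 : ∀ v ∈ closedBall x r, ∀ z ∈ closedBall v.1 r, ((z, v.2) : ℂ × ℂ) ∈ D3 := by
      intro v hv z hz
      rw [hD3_def, mem_closedBall, Prod.dist_eq]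
      have h1 := dist_triangle z v.1 x.1
      have h2 := (hfst v x).trans (mem_closedBall.1 hv)
      have h3 := (hsnd v x).trans (mem_closedBall.1 hv)
      have h4 := mem_closedBall.1 hz
      refine max_le ?_ ?_ <;> dsimp only <;> linarith only [h1, h2, h3, h4, hr]
    have hmem2 : ∀ v ∈ closedBall x r, ∀ z ∈ closedBall v.2 r, ((v.1, z) : ℂ × ℂ) ∈ D3 := by
      intro v hv z hz
      rw [hD3_def, mem_closedBall, Prod.dist_eq]
      have h1 := dist_triangle z v.2 x.2
      have h2 := (hfst v x).trans (mem_closedBall.1 hv)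
      have h3 := (hsnd v x).trans (mem_closedBall.1 hv)
      have h4 := mem_closedBall.1 hz
      refine max_le ?_ ?_ <;> dsimp only <;> linarith only [h1, h2, h3, h4, hr]
    -- bounds for fderiv of h on closedBall x r
    have hαβb : ∀ v ∈ closedBall x r,
        Complex.abs (fderiv ℂ h v ((1:ℂ), (0:ℂ))) ≤ M₀ / r ∧
        Complex.abs (fderiv ℂ h v ((0:ℂ), (1:ℂ))) ≤ M₀ / r := by
      intro v hv
      have hvD3 : v ∈ D3 := closedBall_subset_closedBall (by linarith only [hr]) hv
      have hvU : v ∈ U := hD3U hvD3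
      constructor
      · exact cauchy_est hr
          (fun z hz =>
            (hasDerivAt_slice_fst (hdiffAt (z, v.2) (hD3U (hmem1 v hv z hz)))).differentiableAt)
          (hasDerivAt_slice_fst (hdiffAt v hvU))
          (fun z hz => hM₀ _ (hmem1 v hv z hz))
      · exact cauchy_est hr
          (fun z hz =>
            (hasDerivAt_slice_snd (hdiffAt (v.1, z) (hD3U (hmem2 v hv z hz)))).differentiableAt)
          (hasDerivAt_slice_snd (hdiffAt v hvU))
          (fun z hz => hM₀ _ (hmem2 v hv z hz))
    -- green function bounds
    obtain ⟨C₁, hC₁, N₁, hgPD⟩ := hgP D3 hD3B hD3c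
    set K₁ := Real.exp (2 * C₁) / r with hK₁_def
    have hK₁ : 0 < K₁ := by positivity
    clear_value K₁
    set M₁ := M₀ / r with hM₁_def
    have hM₁0 : 0 ≤ M₁ := by positivity
    clear_value M₁
    set εq := m / (8 * (1 + Complex.abs a₁ + Complex.abs a₂) * (K₁ + M₁ + 1)) with hεq_def
    have habs_nn : ∀ z : ℂ, 0 ≤ Complex.abs z := fun z => norm_nonneg z
    have habs_subf : ∀ u w : ℂ, Complex.abs (u - w) ≤ Complex.abs u + Complex.abs w := by
      intro u w
      exact norm_sub_le u w
    have habs_addf : ∀ u w : ℂ, Complex.abs (u + w) ≤ Complex.abs u + Complex.abs w := by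
      intro u w
      exact norm_add_le u w
    have hεq : 0 < εq := by
      apply div_pos hm
      have := habs_nn a₁; have := habs_nn a₂
      positivity
    obtain ⟨N₂, hQPD⟩ := hQP D3 hD3B hD3c εq hεq
    clear_value εq
    -- choice of ρ via continuity of the derivative
    have he1 : ‖(((1:ℂ), (0:ℂ)) : ℂ × ℂ)‖ ≤ 1 := by
      rw [Prod.norm_def]; simp
    have he2 : ‖(((0:ℂ), (1:ℂ)) : ℂ × ℂ)‖ ≤ 1 := by
      rw [Prod.norm_def]; simp
    have hε' : 0 < m / (4 * (1 + Complex.abs a₃ + Complex.abs a₄)) := by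
      apply div_pos hm
      have := habs_nn a₃; have := habs_nn a₄
      positivity
    obtain ⟨ρ₁, hρ₁, hρ₁r, hρ₁close⟩ := fderiv_close hUo hhd hr hD3U hε' he1
    obtain ⟨ρ₂, hρ₂, hρ₂r, hρ₂close⟩ := fderiv_close hUo hhd hr hD3U hε' he2
    set ρ := min ρ₁ ρ₂ with hρ_def
    have hρ0 : 0 < ρ := lt_min hρ₁ hρ₂
    have hρr : ρ ≤ r := le_trans (min_le_left _ _) hρ₁r
    have hWlow : ∀ v ∈ closedBall x ρ, m / 2 ≤
        Complex.abs (a₄ * fderiv ℂ h v ((1:ℂ), (0:ℂ)) - a₃ * fderiv ℂ h v ((0:ℂ), (1:ℂ))) := by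
      intro v hv
      have h1 := hρ₁close v (closedBall_subset_closedBall (min_le_left _ _) hv)
      have h2 := hρ₂close v (closedBall_subset_closedBall (min_le_right _ _) hv)
      set α := fderiv ℂ h v ((1:ℂ), (0:ℂ)) with hα_def
      set β := fderiv ℂ h v ((0:ℂ), (1:ℂ)) with hβ_def
      have h3 : Complex.abs ((a₄ * α - a₃ * β) - (a₄ * α₀ - a₃ * β₀)) ≤
          (Complex.abs a₄ + Complex.abs a₃) * (m / (4 * (1 + Complex.abs a₃ + Complex.abs a₄))) := by
        have e1 : (a₄ * α - a₃ * β) - (a₄ * α₀ - a₃ * β₀)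
            = a₄ * (α - α₀) - a₃ * (β - β₀) := by ring
        rw [e1]
        calc Complex.abs (a₄ * (α - α₀) - a₃ * (β - β₀))
            ≤ Complex.abs (a₄ * (α - α₀)) + Complex.abs (a₃ * (β - β₀)) := by
              exact habs_subf _ _
          _ = Complex.abs a₄ * Complex.abs (α - α₀) + Complex.abs a₃ * Complex.abs (β - β₀) := by
              rw [norm_mul, norm_mul]
          _ ≤ Complex.abs a₄ * (m / (4 * (1 + Complex.abs a₃ + Complex.abs a₄)))
              + Complex.abs a₃ * (m / (4 * (1 + Complex.abs a₃ + Complex.abs a₄))) := by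
              have := habs_nn a₃; have := habs_nn a₄
              gcongr
          _ = (Complex.abs a₄ + Complex.abs a₃)
              * (m / (4 * (1 + Complex.abs a₃ + Complex.abs a₄))) := by ring
      have h4 : (Complex.abs a₄ + Complex.abs a₃)
          * (m / (4 * (1 + Complex.abs a₃ + Complex.abs a₄))) ≤ m / 4 := by
        have ha3 := habs_nn a₃; have ha4 := habs_nn a₄
        have hpos : (0:ℝ) < 4 * (1 + Complex.abs a₃ + Complex.abs a₄) := by positivity
        rw [← mul_div_assoc, div_le_div_iff₀ hpos (by norm_num : (0:ℝ) < 4)]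
        have h1 : 0 ≤ m * Complex.abs a₃ := mul_nonneg hm.le ha3
        have h2 : 0 ≤ m * Complex.abs a₄ := mul_nonneg hm.le ha4
        linarith only [hm.le, h1, h2]
      have h5 : m ≤ Complex.abs (a₄ * α - a₃ * β)
          + Complex.abs ((a₄ * α - a₃ * β) - (a₄ * α₀ - a₃ * β₀)) := by
        have e2 : (a₄ * α₀ - a₃ * β₀)
            = (a₄ * α - a₃ * β) - ((a₄ * α - a₃ * β) - (a₄ * α₀ - a₃ * β₀)) := by ring
        calc m = Complex.abs (a₄ * α₀ - a₃ * β₀) := hm_def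
          _ = Complex.abs ((a₄ * α - a₃ * β) - ((a₄ * α - a₃ * β) - (a₄ * α₀ - a₃ * β₀))) := by
              rw [← e2]
          _ ≤ _ := habs_subf _ _
      linarith only [h3, h4, h5, hm.le]
    -- extrema of g on D3
    obtain ⟨xmin, hxminD, hxmin⟩ := hD3c.exists_isMinOn ⟨x, hxD3⟩ hgcont.continuousOn
    set δ := g xmin with hδ_def
    have hδ0 : 0 < δ := by
      have := hD3B hxminD; rw [hB] at this; exact this
    have hδle : ∀ y ∈ D3, δ ≤ g y := fun y hy => hxmin hy
    clear_value δ
    obtain ⟨Gb, hGb⟩ := hD3c.exists_bound_of_continuousOn hgcont.continuousOn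
    have hGb0 : 0 ≤ Gb := le_trans (norm_nonneg _) (hGb x hxD3)
    -- eventual bounds
    set b := max (Complex.abs J) 1 with hb_def
    have hb1 : (1:ℝ) ≤ b := le_max_right _ _
    have hJb' : Complex.abs J ≤ b := le_max_left _ _
    clear_value b
    set c₀ := Complex.abs (a₁ * a₄ - a₂ * a₃) with hc₀_def
    have hc₀0 : 0 ≤ c₀ := habs_nn _
    clear_value c₀
    have hev1 : ∀ᶠ n : ℕ in atTop,
        (Complex.abs a₄ + Complex.abs a₃) * K₁ ≤ m / 8 * (d:ℝ) ^ n := by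
      have := eventually_linear_le_pow hdR (show (0:ℝ) < m / 8 by positivity)
        ((Complex.abs a₄ + Complex.abs a₃) * K₁) 0
      filter_upwards [this] with n hn
      simpa using hn
    have hev2 : ∀ᶠ n : ℕ in atTop,
        Complex.abs J ^ n + c₀ ≤ m / 8 * Real.exp (δ * (d:ℝ) ^ n - C₁) := by
      have hexp := eventually_linear_le_pow hdR hδ0
        (Real.log (1 + c₀) - (Real.log (m / 8) - C₁)) (Real.log b)
      filter_upwards [hexp] with n hn
      have hJb : Complex.abs J ^ n ≤ b ^ n :=
        pow_le_pow_left₀ (habs_nn _) hJb' n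
      have hbn : (1:ℝ) ≤ b ^ n := one_le_pow₀ hb1
      have hib1 : Complex.abs J ^ n + c₀ ≤ (1 + c₀) * b ^ n := by
        have hcb : c₀ * 1 ≤ c₀ * b ^ n := mul_le_mul_of_nonneg_left hbn hc₀0
        linarith only [hJb, hcb]
      have hib2 : (1 + c₀) * b ^ n = Real.exp (Real.log (1 + c₀) + n * Real.log b) := by
        rw [Real.exp_add, Real.exp_log (by linarith only [hc₀0]), Real.exp_nat_mul,
          Real.exp_log (by linarith only [hb1])]
      have hib3 : Real.exp (Real.log (1 + c₀) + n * Real.log b)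
          ≤ Real.exp (Real.log (m / 8) - C₁ + δ * (d:ℝ) ^ n) := Real.exp_le_exp.2 (by linarith only [hn])
      have hib4 : Real.exp (Real.log (m / 8) - C₁ + δ * (d:ℝ) ^ n)
          = m / 8 * Real.exp (δ * (d:ℝ) ^ n - C₁) := by
        rw [show Real.log (m / 8) - C₁ + δ * (d:ℝ) ^ n
            = Real.log (m / 8) + (δ * (d:ℝ) ^ n - C₁) by ring,
          Real.exp_add, Real.exp_log (by positivity)]
      rw [hib2] at hib1
      linarith only [hib1, hib3, hib4]
    obtain ⟨N₃, hN₃⟩ := eventually_atTop.1 (hev1.and hev2)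
    -- remaining constants
    set M₂ := (Complex.abs a₄ + Complex.abs a₃) * M₁ with hM₂_def
    have hM₂0 : 0 ≤ M₂ := by
      have := habs_nn a₃; have := habs_nn a₄
      positivity
    clear_value M₂
    set CL := |Real.log (m / 8)| + |Real.log (M₂ + m)| with hCL_def
    have hCL0 : 0 ≤ CL := by positivity
    clear_value CL
    have hlogd : 0 < Real.log d := Real.log_pos (by exact_mod_cast hd)
    refine ⟨ρ, hρ0, 2 * (CL + C₁ + Gb + Real.log d) + 1, by positivity,
      max (max N₁ N₂) (max N₃ 1), ?_⟩
    intro n hn v hv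
    have hnN₁ : N₁ ≤ n := le_trans (le_trans (le_max_left _ _) (le_max_left _ _)) hn
    have hnN₂ : N₂ ≤ n := le_trans (le_trans (le_max_right _ _) (le_max_left _ _)) hn
    have hnN₃ : N₃ ≤ n := le_trans (le_trans (le_max_left _ _) (le_max_right _ _)) hn
    have hn1 : 1 ≤ n := le_trans (le_trans (le_max_right _ _) (le_max_right _ _)) hn
    set t : ℝ := (d:ℝ) ^ n with ht_def
    have ht0 : 0 < t := by rw [ht_def]; positivity
    have ht2 : (2:ℝ) ≤ t := by
      have h2d : (2:ℝ) ≤ (d:ℝ) := by exact_mod_cast hd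
      calc (2:ℝ) ≤ (d:ℝ) := h2d
        _ = (d:ℝ) ^ 1 := (pow_one _).symm
        _ ≤ (d:ℝ) ^ n := pow_le_pow_right₀ (by linarith only [hdR]) hn1
    have ht1 : (1:ℝ) ≤ t := by linarith only [ht2]
    clear_value t
    obtain ⟨hbig1, hbig2⟩ := hN₃ n hnN₃
    rw [← ht_def] at hbig1 hbig2
    set tc : ℂ := (t : ℂ) with htc_def
    have habstc : Complex.abs tc = t := by
      rw [htc_def, Complex.norm_real, Real.norm_eq_abs, abs_of_pos ht0]
    -- rearranged Green bounds
    have hPb : ∀ y ∈ D3, ev (P n) y ≠ 0 ∧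
        |Real.log (Complex.abs (ev (P n) y)) - t * g y| ≤ C₁ := by
      intro y hy
      obtain ⟨h1, h2⟩ := hgPD n hnN₁ y hy
      rw [← ht_def] at h2
      refine ⟨h1, ?_⟩
      have h3 := mul_le_mul_of_nonneg_left h2 ht0.le
      have h4 : t * (C₁ / t) = C₁ := by field_simp [ne_of_gt ht0]
      have h5 : t * |g y - Real.log (Complex.abs (ev (P n) y)) / t|
          = |t * g y - Real.log (Complex.abs (ev (P n) y))| := by
        rw [show t * |g y - Real.log (Complex.abs (ev (P n) y)) / t|
            = |t| * |g y - Real.log (Complex.abs (ev (P n) y)) / t| by rw [abs_of_pos ht0],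
          ← abs_mul]
        congr 1
        field_simp
      rw [h5, h4] at h3
      rw [abs_sub_comm]
      exact h3
    have hvr : v ∈ closedBall x r := closedBall_subset_closedBall hρr hv
    have hvD3 : v ∈ D3 := closedBall_subset_closedBall (by linarith only [hr]) hvr
    have hvU : v ∈ U := hD3U hvD3
    obtain ⟨hp0, hplog⟩ := hPb v hvD3
    have hpabs : 0 < Complex.abs (ev (P n) v) := norm_pos_iff.mpr hp0
    have hexp_le : Real.exp (t * g v) ≤ Real.exp C₁ * Complex.abs (ev (P n) v) := by
      have h1 := (abs_le.1 hplog).1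
      have h2 : t * g v ≤ Real.log (Complex.abs (ev (P n) v)) + C₁ := by linarith only [h1]
      calc Real.exp (t * g v) ≤ Real.exp (Real.log (Complex.abs (ev (P n) v)) + C₁) :=
            Real.exp_le_exp.2 h2
        _ = Real.exp C₁ * Complex.abs (ev (P n) v) := by
            rw [Real.exp_add, Real.exp_log hpabs]; ring
    have hp_lower : Real.exp (δ * t - C₁) ≤ Complex.abs (ev (P n) v) := by
      have h1 := (abs_le.1 hplog).1
      have h2 : δ * t ≤ t * g v := by
        have h3 := hδle v hvD3
        have := mul_le_mul_of_nonneg_left h3 ht0.le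
        linarith only [this]
      have h4 : δ * t - C₁ ≤ Real.log (Complex.abs (ev (P n) v)) := by linarith only [h1, h2]
      calc Real.exp (δ * t - C₁) ≤ Real.exp (Real.log (Complex.abs (ev (P n) v))) :=
            Real.exp_le_exp.2 h4
        _ = Complex.abs (ev (P n) v) := Real.exp_log hpabs
    -- the re identity
    have hre : ∀ y ∈ D3, (tc * h y).re = t * g y := by
      intro y hy
      rw [htc_def, Complex.re_ofReal_mul, hgh y (hD3U hy)]
    -- slice bounds for P and Q
    have hbP1 : ∀ z ∈ closedBall v.1 r,
        Complex.abs (ev (P n) (z, v.2)) * Real.exp (-(tc * h (z, v.2)).re) ≤ Real.exp C₁ := by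
      intro z hz
      have hy : ((z, v.2) : ℂ × ℂ) ∈ D3 := hmem1 v hvr z hz
      obtain ⟨hy0, hylog⟩ := hPb _ hy
      rw [hre _ hy]
      have h1 := (abs_le.1 hylog).2
      rw [show Complex.abs (ev (P n) (z, v.2))
          = Real.exp (Real.log (Complex.abs (ev (P n) (z, v.2))))
          from (Real.exp_log (norm_pos_iff.mpr hy0)).symm, ← Real.exp_add]
      exact Real.exp_le_exp.2 (by linarith only [h1])
    have hbP2 : ∀ z ∈ closedBall v.2 r,
        Complex.abs (ev (P n) (v.1, z)) * Real.exp (-(tc * h (v.1, z)).re) ≤ Real.exp C₁ := by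
      intro z hz
      have hy : ((v.1, z) : ℂ × ℂ) ∈ D3 := hmem2 v hvr z hz
      obtain ⟨hy0, hylog⟩ := hPb _ hy
      rw [hre _ hy]
      have h1 := (abs_le.1 hylog).2
      rw [show Complex.abs (ev (P n) (v.1, z))
          = Real.exp (Real.log (Complex.abs (ev (P n) (v.1, z))))
          from (Real.exp_log (norm_pos_iff.mpr hy0)).symm, ← Real.exp_add]
      exact Real.exp_le_exp.2 (by linarith only [h1])
    have hbQ1 : ∀ z ∈ closedBall v.1 r,
        Complex.abs (ev (Q n) (z, v.2)) * Real.exp (-(tc * h (z, v.2)).re)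
          ≤ εq * Real.exp C₁ := by
      intro z hz
      have hy : ((z, v.2) : ℂ × ℂ) ∈ D3 := hmem1 v hvr z hz
      have hQ := hQPD n hnN₂ _ hy
      have hP := hbP1 z hz
      calc Complex.abs (ev (Q n) (z, v.2)) * Real.exp (-(tc * h (z, v.2)).re)
          ≤ εq * Complex.abs (ev (P n) (z, v.2)) * Real.exp (-(tc * h (z, v.2)).re) := by
            apply mul_le_mul_of_nonneg_right hQ (Real.exp_pos _).le
        _ = εq * (Complex.abs (ev (P n) (z, v.2)) * Real.exp (-(tc * h (z, v.2)).re)) := by ring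
        _ ≤ εq * Real.exp C₁ := mul_le_mul_of_nonneg_left hP hεq.le
    have hbQ2 : ∀ z ∈ closedBall v.2 r,
        Complex.abs (ev (Q n) (v.1, z)) * Real.exp (-(tc * h (v.1, z)).re)
          ≤ εq * Real.exp C₁ := by
      intro z hz
      have hy : ((v.1, z) : ℂ × ℂ) ∈ D3 := hmem2 v hvr z hz
      have hQ := hQPD n hnN₂ _ hy
      have hP := hbP2 z hz
      calc Complex.abs (ev (Q n) (v.1, z)) * Real.exp (-(tc * h (v.1, z)).re)
          ≤ εq * Complex.abs (ev (P n) (v.1, z)) * Real.exp (-(tc * h (v.1, z)).re) := by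
            apply mul_le_mul_of_nonneg_right hQ (Real.exp_pos _).le
        _ = εq * (Complex.abs (ev (P n) (v.1, z)) * Real.exp (-(tc * h (v.1, z)).re)) := by ring
        _ ≤ εq * Real.exp C₁ := mul_le_mul_of_nonneg_left hP hεq.le
    set α := fderiv ℂ h v ((1:ℂ), (0:ℂ)) with hα_def
    set β := fderiv ℂ h v ((0:ℂ), (1:ℂ)) with hβ_def
    have hsl1 := slice_bound hr (hasDerivAt_ev_fst (P n) v.2 v.1)
      (fun z _ => (hasDerivAt_ev_fst (P n) v.2 z).differentiableAt)
      (HasDerivAt.const_mul tc (hasDerivAt_slice_fst (hdiffAt v hvU)))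
      (fun z hz => DifferentiableAt.const_mul
        (hasDerivAt_slice_fst (hdiffAt _ (hD3U (hmem1 v hvr z hz)))).differentiableAt tc)
      hbP1
    have hsl2 := slice_bound hr (hasDerivAt_ev_snd (P n) v.1 v.2)
      (fun z _ => (hasDerivAt_ev_snd (P n) v.1 z).differentiableAt)
      (HasDerivAt.const_mul tc (hasDerivAt_slice_snd (hdiffAt v hvU)))
      (fun z hz => DifferentiableAt.const_mul
        (hasDerivAt_slice_snd (hdiffAt _ (hD3U (hmem2 v hvr z hz)))).differentiableAt tc)
      hbP2
    have hsl3 := slice_bound hr (hasDerivAt_ev_fst (Q n) v.2 v.1)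
      (fun z _ => (hasDerivAt_ev_fst (Q n) v.2 z).differentiableAt)
      (HasDerivAt.const_mul tc (hasDerivAt_slice_fst (hdiffAt v hvU)))
      (fun z hz => DifferentiableAt.const_mul
        (hasDerivAt_slice_fst (hdiffAt _ (hD3U (hmem1 v hvr z hz)))).differentiableAt tc)
      hbQ1
    have hsl4 := slice_bound hr (hasDerivAt_ev_snd (Q n) v.1 v.2)
      (fun z _ => (hasDerivAt_ev_snd (Q n) v.1 z).differentiableAt)
      (HasDerivAt.const_mul tc (hasDerivAt_slice_snd (hdiffAt v hvU)))
      (fun z hz => DifferentiableAt.const_mul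
        (hasDerivAt_slice_snd (hdiffAt _ (hD3U (hmem2 v hvr z hz)))).differentiableAt tc)
      hbQ2
    simp only [Prod.mk.eta] at hsl1 hsl2 hsl3 hsl4
    rw [hre v hvD3] at hsl1 hsl2 hsl3 hsl4
    -- turn slice bounds into multiplicative bounds
    have hKp : Real.exp C₁ / r * Real.exp (t * g v) ≤ K₁ * Complex.abs (ev (P n) v) := by
      calc Real.exp C₁ / r * Real.exp (t * g v)
          ≤ Real.exp C₁ / r * (Real.exp C₁ * Complex.abs (ev (P n) v)) := by
            apply mul_le_mul_of_nonneg_left hexp_le (by positivity)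
        _ = K₁ * Complex.abs (ev (P n) v) := by
            rw [hK₁_def, show (2:ℝ) * C₁ = C₁ + C₁ by ring, Real.exp_add]
            field_simp
    have hKq : εq * Real.exp C₁ / r * Real.exp (t * g v)
        ≤ εq * K₁ * Complex.abs (ev (P n) v) := by
      calc εq * Real.exp C₁ / r * Real.exp (t * g v)
          ≤ εq * Real.exp C₁ / r * (Real.exp C₁ * Complex.abs (ev (P n) v)) := by
            apply mul_le_mul_of_nonneg_left hexp_le (by positivity)
        _ = εq * (K₁ * Complex.abs (ev (P n) v)) := by
            rw [hK₁_def, show (2:ℝ) * C₁ = C₁ + C₁ by ring, Real.exp_add]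
            field_simp
        _ = εq * K₁ * Complex.abs (ev (P n) v) := by ring
    have hPz : Complex.abs (ev (MvPolynomial.pderiv 0 (P n)) v - tc * α * ev (P n) v)
        ≤ K₁ * Complex.abs (ev (P n) v) := le_trans hsl1 hKp
    have hPw : Complex.abs (ev (MvPolynomial.pderiv 1 (P n)) v - tc * β * ev (P n) v)
        ≤ K₁ * Complex.abs (ev (P n) v) := le_trans hsl2 hKp
    have hQz : Complex.abs (ev (MvPolynomial.pderiv 0 (Q n)) v - tc * α * ev (Q n) v)
        ≤ εq * K₁ * Complex.abs (ev (P n) v) := le_trans hsl3 hKq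
    have hQw : Complex.abs (ev (MvPolynomial.pderiv 1 (Q n)) v - tc * β * ev (Q n) v)
        ≤ εq * K₁ * Complex.abs (ev (P n) v) := le_trans hsl4 hKq
    have hqp := hQPD n hnN₂ v hvD3
    have hα : Complex.abs α ≤ M₁ := by
      rw [hα_def]; exact (hαβb v hvr).1
    have hβ : Complex.abs β ≤ M₁ := by
      rw [hβ_def]; exact (hαβb v hvr).2
    have hqzb : Complex.abs (ev (MvPolynomial.pderiv 0 (Q n)) v)
        ≤ εq * (K₁ + M₁) * (t * Complex.abs (ev (P n) v)) := by
      have h1 : Complex.abs (ev (MvPolynomial.pderiv 0 (Q n)) v)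
          ≤ Complex.abs (ev (MvPolynomial.pderiv 0 (Q n)) v - tc * α * ev (Q n) v)
            + Complex.abs (tc * α * ev (Q n) v) := by
        have := habs_addf (ev (MvPolynomial.pderiv 0 (Q n)) v - tc * α * ev (Q n) v)
          (tc * α * ev (Q n) v)
        simpa using this
      have h2 : Complex.abs (tc * α * ev (Q n) v)
          = t * Complex.abs α * Complex.abs (ev (Q n) v) := by
        rw [norm_mul, norm_mul, habstc]
      have h3 : t * Complex.abs α * Complex.abs (ev (Q n) v)
          ≤ t * M₁ * (εq * Complex.abs (ev (P n) v)) := by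
        apply mul_le_mul (mul_le_mul_of_nonneg_left hα ht0.le) hqp (habs_nn _)
        positivity
      have h4 : εq * K₁ * Complex.abs (ev (P n) v)
          ≤ εq * K₁ * (t * Complex.abs (ev (P n) v)) := by
        have : 0 ≤ εq * K₁ * Complex.abs (ev (P n) v) * (t - 1) :=
          mul_nonneg (mul_nonneg (mul_nonneg hεq.le hK₁.le) (habs_nn _))
            (by linarith only [ht1] : (0:ℝ) ≤ t - 1)
        linarith only [this]
      have h5 := hQz
      rw [h2] at h1
      linarith only [h1, h3, h4, h5]
    have hqwb : Complex.abs (ev (MvPolynomial.pderiv 1 (Q n)) v)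
        ≤ εq * (K₁ + M₁) * (t * Complex.abs (ev (P n) v)) := by
      have h1 : Complex.abs (ev (MvPolynomial.pderiv 1 (Q n)) v)
          ≤ Complex.abs (ev (MvPolynomial.pderiv 1 (Q n)) v - tc * β * ev (Q n) v)
            + Complex.abs (tc * β * ev (Q n) v) := by
        have := habs_addf (ev (MvPolynomial.pderiv 1 (Q n)) v - tc * β * ev (Q n) v)
          (tc * β * ev (Q n) v)
        simpa using this
      have h2 : Complex.abs (tc * β * ev (Q n) v)
          = t * Complex.abs β * Complex.abs (ev (Q n) v) := by
        rw [norm_mul, norm_mul, habstc]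
      have h3 : t * Complex.abs β * Complex.abs (ev (Q n) v)
          ≤ t * M₁ * (εq * Complex.abs (ev (P n) v)) := by
        apply mul_le_mul (mul_le_mul_of_nonneg_left hβ ht0.le) hqp (habs_nn _)
        positivity
      have h4 : εq * K₁ * Complex.abs (ev (P n) v)
          ≤ εq * K₁ * (t * Complex.abs (ev (P n) v)) := by
        have : 0 ≤ εq * K₁ * Complex.abs (ev (P n) v) * (t - 1) :=
          mul_nonneg (mul_nonneg (mul_nonneg hεq.le hK₁.le) (habs_nn _))
            (by linarith only [ht1] : (0:ℝ) ≤ t - 1)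
        linarith only [this]
      have h5 := hQw
      rw [h2] at h1
      linarith only [h1, h3, h4, h5]
    -- Jacobian identity
    have hpqJ : ev (MvPolynomial.pderiv 0 (P n)) v * ev (MvPolynomial.pderiv 1 (Q n)) v
        - ev (MvPolynomial.pderiv 1 (P n)) v * ev (MvPolynomial.pderiv 0 (Q n)) v = J ^ n := by
      have := congrArg (fun p => ev p v) (hJac n hn1)
      simpa [ev, map_mul, map_sub] using this
    set W := a₄ * α - a₃ * β with hW_def
    have hWlo : m / 2 ≤ Complex.abs W := by
      rw [hW_def, hα_def, hβ_def]; exact hWlow v hv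
    have hWhi : Complex.abs W ≤ M₂ := by
      calc Complex.abs W ≤ Complex.abs (a₄ * α) + Complex.abs (a₃ * β) := habs_subf _ _
        _ = Complex.abs a₄ * Complex.abs α + Complex.abs a₃ * Complex.abs β := by
            rw [norm_mul, norm_mul]
        _ ≤ Complex.abs a₄ * M₁ + Complex.abs a₃ * M₁ := by
            have := habs_nn a₃; have := habs_nn a₄
            gcongr
        _ = M₂ := by rw [hM₂_def]; ring
    set E := (ev (MvPolynomial.pderiv 0 (P n)) v - a₁) * (ev (MvPolynomial.pderiv 1 (Q n)) v - a₄)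
      - (ev (MvPolynomial.pderiv 1 (P n)) v - a₂) * (ev (MvPolynomial.pderiv 0 (Q n)) v - a₃)
      with hE_def
    have hEalg : E + tc * ev (P n) v * W
        = J ^ n + (a₁ * a₄ - a₂ * a₃)
          - a₄ * (ev (MvPolynomial.pderiv 0 (P n)) v - tc * α * ev (P n) v)
          + a₃ * (ev (MvPolynomial.pderiv 1 (P n)) v - tc * β * ev (P n) v)
          - a₁ * ev (MvPolynomial.pderiv 1 (Q n)) v
          + a₂ * ev (MvPolynomial.pderiv 0 (Q n)) v := by
      rw [hE_def, hW_def, ← hpqJ]; ring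
    have hεq_small : (Complex.abs a₁ + Complex.abs a₂) * (εq * (K₁ + M₁)) ≤ m / 8 := by
      have ha1 := habs_nn a₁; have ha2 := habs_nn a₂
      have hden : (0:ℝ) < 8 * (1 + Complex.abs a₁ + Complex.abs a₂) * (K₁ + M₁ + 1) := by
        positivity
      have hid : εq * (8 * (1 + Complex.abs a₁ + Complex.abs a₂) * (K₁ + M₁ + 1)) = m := by
        rw [hεq_def]; field_simp
      have p1 : 0 ≤ εq * K₁ := mul_nonneg hεq.le hK₁.le
      have p2 : 0 ≤ εq * M₁ := mul_nonneg hεq.le hM₁0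
      have p3 : 0 ≤ (Complex.abs a₁ + Complex.abs a₂) * εq :=
        mul_nonneg (add_nonneg ha1 ha2) hεq.le
      linarith only [hid, hεq.le, p1, p2, p3]
    have hR : Complex.abs (E + tc * ev (P n) v * W)
        ≤ 3 * (m / 8) * (t * Complex.abs (ev (P n) v)) := by
      rw [hEalg]
      have b1 : Complex.abs (J ^ n + (a₁ * a₄ - a₂ * a₃))
          ≤ m / 8 * (t * Complex.abs (ev (P n) v)) := by
        have h1 : Complex.abs (J ^ n + (a₁ * a₄ - a₂ * a₃)) ≤ Complex.abs J ^ n + c₀ := by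
          calc Complex.abs (J ^ n + (a₁ * a₄ - a₂ * a₃))
              ≤ Complex.abs (J ^ n) + Complex.abs (a₁ * a₄ - a₂ * a₃) := habs_addf _ _
            _ = Complex.abs J ^ n + c₀ := by rw [norm_pow, hc₀_def]
        have h2 : Real.exp (δ * t - C₁) ≤ t * Complex.abs (ev (P n) v) := by
          have := mul_le_mul_of_nonneg_right ht1 hpabs.le
          linarith only [hp_lower, this]
        calc Complex.abs (J ^ n + (a₁ * a₄ - a₂ * a₃)) ≤ Complex.abs J ^ n + c₀ := h1
          _ ≤ m / 8 * Real.exp (δ * t - C₁) := hbig2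
          _ ≤ m / 8 * (t * Complex.abs (ev (P n) v)) := by
              apply mul_le_mul_of_nonneg_left h2 (by positivity)
      have b2 : Complex.abs (a₄ * (ev (MvPolynomial.pderiv 0 (P n)) v - tc * α * ev (P n) v))
            + Complex.abs (a₃ * (ev (MvPolynomial.pderiv 1 (P n)) v - tc * β * ev (P n) v))
          ≤ m / 8 * (t * Complex.abs (ev (P n) v)) := by
        have h1 : Complex.abs (a₄ * (ev (MvPolynomial.pderiv 0 (P n)) v - tc * α * ev (P n) v))
            ≤ Complex.abs a₄ * (K₁ * Complex.abs (ev (P n) v)) := by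
          rw [norm_mul]
          exact mul_le_mul_of_nonneg_left hPz (habs_nn _)
        have h2 : Complex.abs (a₃ * (ev (MvPolynomial.pderiv 1 (P n)) v - tc * β * ev (P n) v))
            ≤ Complex.abs a₃ * (K₁ * Complex.abs (ev (P n) v)) := by
          rw [norm_mul]
          exact mul_le_mul_of_nonneg_left hPw (habs_nn _)
        have h3 : (Complex.abs a₄ + Complex.abs a₃) * K₁ * Complex.abs (ev (P n) v)
            ≤ m / 8 * t * Complex.abs (ev (P n) v) := by
          apply mul_le_mul_of_nonneg_right hbig1 (habs_nn _)
        linarith only [h1, h2, h3]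
      have b3 : Complex.abs (a₁ * ev (MvPolynomial.pderiv 1 (Q n)) v)
            + Complex.abs (a₂ * ev (MvPolynomial.pderiv 0 (Q n)) v)
          ≤ m / 8 * (t * Complex.abs (ev (P n) v)) := by
        have h1 : Complex.abs (a₁ * ev (MvPolynomial.pderiv 1 (Q n)) v)
            ≤ Complex.abs a₁ * (εq * (K₁ + M₁) * (t * Complex.abs (ev (P n) v))) := by
          rw [norm_mul]
          exact mul_le_mul_of_nonneg_left hqwb (habs_nn _)
        have h2 : Complex.abs (a₂ * ev (MvPolynomial.pderiv 0 (Q n)) v)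
            ≤ Complex.abs a₂ * (εq * (K₁ + M₁) * (t * Complex.abs (ev (P n) v))) := by
          rw [norm_mul]
          exact mul_le_mul_of_nonneg_left hqzb (habs_nn _)
        have h3 := mul_le_mul_of_nonneg_right hεq_small
          (mul_nonneg ht0.le (habs_nn (ev (P n) v)))
        linarith only [h1, h2, h3]
      calc Complex.abs (J ^ n + (a₁ * a₄ - a₂ * a₃)
            - a₄ * (ev (MvPolynomial.pderiv 0 (P n)) v - tc * α * ev (P n) v)
            + a₃ * (ev (MvPolynomial.pderiv 1 (P n)) v - tc * β * ev (P n) v)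
            - a₁ * ev (MvPolynomial.pderiv 1 (Q n)) v
            + a₂ * ev (MvPolynomial.pderiv 0 (Q n)) v)
          ≤ Complex.abs (J ^ n + (a₁ * a₄ - a₂ * a₃)
            - a₄ * (ev (MvPolynomial.pderiv 0 (P n)) v - tc * α * ev (P n) v)
            + a₃ * (ev (MvPolynomial.pderiv 1 (P n)) v - tc * β * ev (P n) v)
            - a₁ * ev (MvPolynomial.pderiv 1 (Q n)) v)
            + Complex.abs (a₂ * ev (MvPolynomial.pderiv 0 (Q n)) v) := habs_addf _ _
        _ ≤ Complex.abs (J ^ n + (a₁ * a₄ - a₂ * a₃)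
            - a₄ * (ev (MvPolynomial.pderiv 0 (P n)) v - tc * α * ev (P n) v)
            + a₃ * (ev (MvPolynomial.pderiv 1 (P n)) v - tc * β * ev (P n) v))
            + Complex.abs (a₁ * ev (MvPolynomial.pderiv 1 (Q n)) v)
            + Complex.abs (a₂ * ev (MvPolynomial.pderiv 0 (Q n)) v) := by
            have := habs_subf (J ^ n + (a₁ * a₄ - a₂ * a₃)
              - a₄ * (ev (MvPolynomial.pderiv 0 (P n)) v - tc * α * ev (P n) v)
              + a₃ * (ev (MvPolynomial.pderiv 1 (P n)) v - tc * β * ev (P n) v))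
              (a₁ * ev (MvPolynomial.pderiv 1 (Q n)) v)
            linarith only [this]
        _ ≤ Complex.abs (J ^ n + (a₁ * a₄ - a₂ * a₃)
            - a₄ * (ev (MvPolynomial.pderiv 0 (P n)) v - tc * α * ev (P n) v))
            + Complex.abs (a₃ * (ev (MvPolynomial.pderiv 1 (P n)) v - tc * β * ev (P n) v))
            + Complex.abs (a₁ * ev (MvPolynomial.pderiv 1 (Q n)) v)
            + Complex.abs (a₂ * ev (MvPolynomial.pderiv 0 (Q n)) v) := by
            have := habs_addf (J ^ n + (a₁ * a₄ - a₂ * a₃)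
              - a₄ * (ev (MvPolynomial.pderiv 0 (P n)) v - tc * α * ev (P n) v))
              (a₃ * (ev (MvPolynomial.pderiv 1 (P n)) v - tc * β * ev (P n) v))
            linarith only [this]
        _ ≤ Complex.abs (J ^ n + (a₁ * a₄ - a₂ * a₃))
            + Complex.abs (a₄ * (ev (MvPolynomial.pderiv 0 (P n)) v - tc * α * ev (P n) v))
            + Complex.abs (a₃ * (ev (MvPolynomial.pderiv 1 (P n)) v - tc * β * ev (P n) v))
            + Complex.abs (a₁ * ev (MvPolynomial.pderiv 1 (Q n)) v)
            + Complex.abs (a₂ * ev (MvPolynomial.pderiv 0 (Q n)) v) := by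
            have := habs_subf (J ^ n + (a₁ * a₄ - a₂ * a₃))
              (a₄ * (ev (MvPolynomial.pderiv 0 (P n)) v - tc * α * ev (P n) v))
            linarith only [this]
        _ ≤ 3 * (m / 8) * (t * Complex.abs (ev (P n) v)) := by linarith only [b1, b2, b3]
    have habs_tcpW : Complex.abs (tc * ev (P n) v * W)
        = t * Complex.abs (ev (P n) v) * Complex.abs W := by
      rw [norm_mul, norm_mul, habstc]
    have hT0' : (0:ℝ) < t * Complex.abs (ev (P n) v) := by positivity
    have hElow : m / 8 * (t * Complex.abs (ev (P n) v)) ≤ Complex.abs E := by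
      have h1 : Complex.abs (tc * ev (P n) v * W)
          ≤ Complex.abs (E + tc * ev (P n) v * W) + Complex.abs E := by
        have := habs_subf (E + tc * ev (P n) v * W) E
        simpa using this
      rw [habs_tcpW] at h1
      have h2 : t * Complex.abs (ev (P n) v) * (m / 2)
          ≤ t * Complex.abs (ev (P n) v) * Complex.abs W := by
        apply mul_le_mul_of_nonneg_left hWlo (by positivity)
      linarith only [h1, h2, hR]
    have hEhigh : Complex.abs E ≤ (M₂ + m) * (t * Complex.abs (ev (P n) v)) := by
      have h1 : Complex.abs E
          ≤ Complex.abs (E + tc * ev (P n) v * W) + Complex.abs (tc * ev (P n) v * W) := by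
        have := habs_subf (E + tc * ev (P n) v * W) (tc * ev (P n) v * W)
        simpa using this
      rw [habs_tcpW] at h1
      have h2 : t * Complex.abs (ev (P n) v) * Complex.abs W
          ≤ t * Complex.abs (ev (P n) v) * M₂ := by
        apply mul_le_mul_of_nonneg_left hWhi (by positivity)
      have h3 : 0 ≤ m * (t * Complex.abs (ev (P n) v)) := mul_nonneg hm.le hT0'.le
      linarith only [h1, h2, hR, h3]
    have hT0 : (0:ℝ) < t * Complex.abs (ev (P n) v) := hT0'
    have hE0 : (0:ℝ) < Complex.abs E := lt_of_lt_of_le (by positivity) hElow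
    have hlogE_low : Real.log (m / 8) + Real.log (t * Complex.abs (ev (P n) v))
        ≤ Real.log (Complex.abs E) := by
      rw [← Real.log_mul (by positivity) (ne_of_gt hT0)]
      exact Real.log_le_log (by positivity) hElow
    have hlogE_high : Real.log (Complex.abs E)
        ≤ Real.log (M₂ + m) + Real.log (t * Complex.abs (ev (P n) v)) := by
      rw [← Real.log_mul (by positivity) (ne_of_gt hT0)]
      exact Real.log_le_log hE0 hEhigh
    have hlogT : Real.log (t * Complex.abs (ev (P n) v))
        = n * Real.log d + Real.log (Complex.abs (ev (P n) v)) := by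
      rw [Real.log_mul (ne_of_gt ht0) (ne_of_gt hpabs), ht_def, Real.log_pow]
    have hplog' := abs_le.1 hplog
    have hgv : |g v| ≤ Gb := by
      have := hGb v hvD3; rwa [Real.norm_eq_abs] at this
    have hgv' := abs_le.1 hgv
    have hCL1 : -CL ≤ Real.log (m / 8) := by
      have q1 := neg_abs_le (Real.log (m / 8))
      have q2 := abs_nonneg (Real.log (M₂ + m))
      rw [hCL_def]; linarith only [q1, q2]
    have hCL2 : Real.log (M₂ + m) ≤ CL := by
      have q1 := le_abs_self (Real.log (M₂ + m))
      have q2 := abs_nonneg (Real.log (m / 8))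
      rw [hCL_def]; linarith only [q1, q2]
    have ht1' : (0:ℝ) < t - 1 := by linarith only [ht2]
    have hn1' : (1:ℝ) ≤ (n:ℝ) := by exact_mod_cast hn1
    have hnlogd : (0:ℝ) ≤ (n:ℝ) * Real.log d := by positivity
    have hnum : |Real.log (Complex.abs E) - t * g v + g v|
        ≤ CL + C₁ + n * Real.log d + Gb := by
      rw [abs_le]
      constructor
      · rw [hlogT] at hlogE_low
        have l2 : t * g v - C₁ ≤ Real.log (Complex.abs (ev (P n) v)) := by
          linarith only [hplog'.1]
        linarith only [hlogE_low, l2, hCL1, hgv'.1, hgv'.2, hnlogd]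
      · rw [hlogT] at hlogE_high
        have l2 : Real.log (Complex.abs (ev (P n) v)) ≤ t * g v + C₁ := by
          linarith only [hplog'.2]
        linarith only [hlogE_high, l2, hCL2, hgv'.1, hgv'.2, hnlogd]
    have hgoal_eq : (t - 1)⁻¹ * Real.log (Complex.abs E) - g v
        = (Real.log (Complex.abs E) - t * g v + g v) / (t - 1) := by
      field_simp
      ring
    rw [hgoal_eq, abs_div, abs_of_pos ht1']
    have hdiv1 : |Real.log (Complex.abs E) - t * g v + g v| / (t - 1)
        ≤ (CL + C₁ + ↑n * Real.log d + Gb) / (t - 1) := by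
      gcongr
    refine hdiv1.trans ?_
    rw [div_le_div_iff₀ ht1' ht0]
    have hS0 : (0:ℝ) ≤ CL + C₁ + Gb + Real.log d := by positivity
    have hX : CL + C₁ + ↑n * Real.log d + Gb ≤ (CL + C₁ + Gb + Real.log d) * n := by
      have := mul_nonneg (add_nonneg (add_nonneg hCL0 hC₁.le) hGb0)
        (by linarith only [hn1'] : (0:ℝ) ≤ (n:ℝ) - 1)
      linarith only [this]
    have hXt := mul_le_mul_of_nonneg_right hX ht0.le
    have hfin : (CL + C₁ + Gb + Real.log d) * ↑n * t
        ≤ (2 * (CL + C₁ + Gb + Real.log d) + 1) * ↑n * (t - 1) := by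
      have p1 : 0 ≤ (CL + C₁ + Gb + Real.log d) * ((n:ℝ) * (t - 2)) :=
        mul_nonneg hS0 (mul_nonneg (by linarith only [hn1']) (by linarith only [ht2]))
      have p2 : 0 ≤ (n:ℝ) * (t - 1) := mul_nonneg (by linarith only [hn1']) (by linarith only [ht2])
      linarith only [p1, p2]
    linarith only [hXt, hfin]
  choose! ρ hρ C hC N hbnd using loc
  obtain ⟨t, htK, hcov⟩ := hKc.elim_nhds_subcover (fun x => ball x (ρ x))
    (fun x hx => ball_mem_nhds x (hρ x hx))
  have hsum : (0:ℝ) ≤ ∑ x ∈ t, C x := Finset.sum_nonneg fun x hx => (hC x (htK x hx)).le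
  refine ⟨1 + ∑ x ∈ t, C x, by linarith only [hsum], t.sup N, ?_⟩
  intro n hn v hv
  obtain ⟨x, hxt, hvx⟩ := Set.mem_iUnion₂.1 (hcov hv)
  have hxK := htK x hxt
  have hb := hbnd x hxK n (le_trans (Finset.le_sup hxt) hn) v (ball_subset_closedBall hvx)
  have hCx : C x ≤ 1 + ∑ y ∈ t, C y := by
    have := Finset.single_le_sum (f := C) (fun i hi => (hC i (htK i hi)).le) hxt
    linarith only [this]
  refine le_trans hb ?_
  gcongr
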